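/- arXiv:1710.09437 — 8 statements merged into one kernel-verified Lean document; each statement's English description precedes it below -/
import Mathlib

section
/- Suppose fewer than 1/3 of validators by weight have published two distinct votes with the same target height (slashing condition I). Then for any two distinct supermajority links s₁→t₁ and s₂→t₂, the target heights differ: h(t₁) ≠ h(t₂). -/
/-- If fewer than 1/3 of validators by weight violate slashing condition I
(two distinct votes with the same target height), then any two distinct
supermajority links have different target heights. -/
theorem stmt_1 {V C : Type*} [DecidableEq V] [DecidableEq C] [Fintype V]
    (w : V → ℝ) (hw : ∀ v, 0 ≤ w v)
    (h : C → ℕ)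
    (votes : Finset (V × C × C))
    (hvotes : ∀ v s t, (v, s, t) ∈ votes → h s < h t)
    (W : ℝ) (hW : W = ∑ v, w v)
    (slashedI : Finset V)
    (hslashedI : ∀ v, v ∈ slashedI ↔ ∃ s₁ t₁ s₂ t₂ : C,
      (v, s₁, t₁) ∈ votes ∧ (v, s₂, t₂) ∈ votes ∧ (s₁, t₁) ≠ (s₂, t₂) ∧ h t₁ = h t₂)
    (hbound : ∑ v ∈ slashedI, w v < (1 / 3 : ℝ) * W)
    (s₁ t₁ s₂ t₂ : C)
    (hlink₁ : (2 / 3 : ℝ) * W ≤ ∑ v ∈ Finset.univ.filter (fun v => (v, s₁, t₁) ∈ votes), w v)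
    (hlink₂ : (2 / 3 : ℝ) * W ≤ ∑ v ∈ Finset.univ.filter (fun v => (v, s₂, t₂) ∈ votes), w v)
    (hdistinct : (s₁, t₁) ≠ (s₂, t₂)) :
    h t₁ ≠ h t₂ := by
  intro heq
  set A := Finset.univ.filter (fun v => (v, s₁, t₁) ∈ votes) with hA
  set B := Finset.univ.filter (fun v => (v, s₂, t₂) ∈ votes) with hB
  have hsub : A ∩ B ⊆ slashedI := by
    intro v hv
    simp only [Finset.mem_inter, hA, hB, Finset.mem_filter] at hv
    exact (hslashedI v).mpr ⟨s₁, t₁, s₂, t₂, hv.1.2, hv.2.2, hdistinct, heq⟩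
  have h1 : ∑ v ∈ A ∩ B, w v ≤ ∑ v ∈ slashedI, w v :=
    Finset.sum_le_sum_of_subset_of_nonneg hsub (fun v _ _ => hw v)
  have h2 : ∑ v ∈ A ∪ B, w v ≤ W := by
    rw [hW]
    exact Finset.sum_le_sum_of_subset_of_nonneg (Finset.subset_univ _) (fun v _ _ => hw v)
  have h3 : ∑ v ∈ A ∪ B, w v + ∑ v ∈ A ∩ B, w v = ∑ v ∈ A, w v + ∑ v ∈ B, w v :=
    Finset.sum_union_inter
  linarith
end

section
/- Suppose fewer than 1/3 of validators by weight have published a pair of votes (s₁,t₁), (s₂,t₂) with h(s₁) < h(s₂) < h(t₂) < h(t₁) (slashing condition II). Then for any two supermajority links s₁→t₁ and s₂→t₂, the strict nesting h(s₁) < h(s₂) < h(t₂) < h(t₁) cannot hold. -/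
/-- If fewer than 1/3 of validators by weight violate slashing condition II
(two votes with strictly nested source/target heights), then for any two
supermajority links s₁→t₁ and s₂→t₂ the strict nesting
h(s₁) < h(s₂) < h(t₂) < h(t₁) cannot hold. -/
theorem stmt_2 {V C : Type*} [DecidableEq V] [DecidableEq C] [Fintype V]
    (w : V → ℝ) (hw : ∀ v, 0 ≤ w v)
    (h : C → ℕ)
    (votes : Finset (V × C × C))
    (hvotes : ∀ v s t, (v, s, t) ∈ votes → h s < h t)
    (W : ℝ) (hW : W = ∑ v, w v)
    (slashedII : Finset V)
    (hslashedII : ∀ v, v ∈ slashedII ↔ ∃ s₁ t₁ s₂ t₂ : C,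
      (v, s₁, t₁) ∈ votes ∧ (v, s₂, t₂) ∈ votes ∧
      h s₁ < h s₂ ∧ h s₂ < h t₂ ∧ h t₂ < h t₁)
    (hbound : ∑ v ∈ slashedII, w v < (1 / 3 : ℝ) * W)
    (s₁ t₁ s₂ t₂ : C)
    (hlink₁ : (2 / 3 : ℝ) * W ≤ ∑ v ∈ Finset.univ.filter (fun v => (v, s₁, t₁) ∈ votes), w v)
    (hlink₂ : (2 / 3 : ℝ) * W ≤ ∑ v ∈ Finset.univ.filter (fun v => (v, s₂, t₂) ∈ votes), w v) :
    ¬(h s₁ < h s₂ ∧ h s₂ < h t₂ ∧ h t₂ < h t₁) := by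

  rintro ⟨h12, h2t, htt⟩
  set A := Finset.univ.filter (fun v => (v, s₁, t₁) ∈ votes) with hA
  set B := Finset.univ.filter (fun v => (v, s₂, t₂) ∈ votes) with hB
  have hsub : A ∩ B ⊆ slashedII := by
    intro v hv
    rw [Finset.mem_inter, hA, hB, Finset.mem_filter, Finset.mem_filter] at hv
    exact (hslashedII v).mpr ⟨s₁, t₁, s₂, t₂, hv.1.2, hv.2.2, h12, h2t, htt⟩
  have hunion : ∑ v ∈ A ∪ B, w v ≤ W := by
    rw [hW]
    exact Finset.sum_le_sum_of_subset_of_nonneg (Finset.subset_univ _)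
      (fun i _ _ => hw i)
  have hkey : ∑ v ∈ A ∪ B, w v + ∑ v ∈ A ∩ B, w v = ∑ v ∈ A, w v + ∑ v ∈ B, w v :=
    Finset.sum_union_inter
  have hinter : (1 / 3 : ℝ) * W ≤ ∑ v ∈ A ∩ B, w v := by
    nlinarith
  have hle : ∑ v ∈ A ∩ B, w v ≤ ∑ v ∈ slashedII, w v :=
    Finset.sum_le_sum_of_subset_of_nonneg hsub (fun i _ _ => hw i)
  linarith
end

section
/- Assume fewer than 1/3 of validators by weight violate slashing condition I (two distinct votes with equal target height). Then for every height n there is at most one supermajority link s→t with h(t) = n. -/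
/-- If fewer than 1/3 of validators by weight violate slashing condition I,
then for every height n there is at most one supermajority link s→t with
h(t) = n. -/
theorem stmt_3 {V C : Type*} [DecidableEq V] [DecidableEq C] [Fintype V]
    (w : V → ℝ) (hw : ∀ v, 0 ≤ w v)
    (h : C → ℕ)
    (votes : Finset (V × C × C))
    (hvotes : ∀ v s t, (v, s, t) ∈ votes → h s < h t)
    (W : ℝ) (hW : W = ∑ v, w v)
    (slashedI : Finset V)
    (hslashedI : ∀ v, v ∈ slashedI ↔ ∃ s₁ t₁ s₂ t₂ : C,
      (v, s₁, t₁) ∈ votes ∧ (v, s₂, t₂) ∈ votes ∧ (s₁, t₁) ≠ (s₂, t₂) ∧ h t₁ = h t₂)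
    (hbound : ∑ v ∈ slashedI, w v < (1 / 3 : ℝ) * W)
    (n : ℕ) (s₁ t₁ s₂ t₂ : C)
    (hlink₁ : (2 / 3 : ℝ) * W ≤ ∑ v ∈ Finset.univ.filter (fun v => (v, s₁, t₁) ∈ votes), w v)
    (hlink₂ : (2 / 3 : ℝ) * W ≤ ∑ v ∈ Finset.univ.filter (fun v => (v, s₂, t₂) ∈ votes), w v)
    (ht₁ : h t₁ = n) (ht₂ : h t₂ = n) :
    s₁ = s₂ ∧ t₁ = t₂ := by
  by_contra hne
  have hpair : (s₁, t₁) ≠ (s₂, t₂) := by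
    intro hp
    apply hne
    exact ⟨congrArg Prod.fst hp, congrArg Prod.snd hp⟩
  set A := Finset.univ.filter (fun v => (v, s₁, t₁) ∈ votes) with hA
  set B := Finset.univ.filter (fun v => (v, s₂, t₂) ∈ votes) with hB
  have hsub : A ∩ B ⊆ slashedI := by
    intro v hv
    simp only [hA, hB, Finset.mem_inter, Finset.mem_filter] at hv
    exact (hslashedI v).2 ⟨s₁, t₁, s₂, t₂, hv.1.2, hv.2.2, hpair, ht₁.trans ht₂.symm⟩
  have hunion : ∑ v ∈ A ∪ B, w v ≤ W := by
    rw [hW]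
    exact Finset.sum_le_sum_of_subset_of_nonneg (Finset.subset_univ _) (fun v _ _ => hw v)
  have hinter : ∑ v ∈ A ∩ B, w v ≤ ∑ v ∈ slashedI, w v :=
    Finset.sum_le_sum_of_subset_of_nonneg hsub (fun v _ _ => hw v)
  have hadd : ∑ v ∈ A ∪ B, w v + ∑ v ∈ A ∩ B, w v = ∑ v ∈ A, w v + ∑ v ∈ B, w v :=
    Finset.sum_union_inter
  linarith
end

section
/- Assume fewer than 1/3 of validators by weight violate slashing condition I. Then for every height n there exists at most one justified checkpoint of height n. -/
/-- A checkpoint is justified if it is the root or the target of a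
supermajority link from a justified checkpoint. -/
inductive Justified {C : Type*} (link : C → C → Prop) (root : C) : C → Prop
  | root : Justified link root root
  | step (c' c : C) : Justified link root c' → link c' c → Justified link root c

/-- If fewer than 1/3 of validators by weight violate slashing condition I,
then for every height there exists at most one justified checkpoint of that
height. -/
theorem stmt_4 {V C : Type*} [DecidableEq V] [DecidableEq C] [Fintype V]
    (w : V → ℝ) (hw : ∀ v, 0 ≤ w v)
    (h : C → ℕ)
    (votes : Finset (V × C × C))
    (W : ℝ) (hW : W = ∑ v, w v)
    (link : C → C → Prop)
    (hlinkdef : ∀ s t, link s t ↔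
      (2 / 3 : ℝ) * W ≤ ∑ v ∈ Finset.univ.filter (fun v => (v, s, t) ∈ votes), w v)
    (hlinkh : ∀ s t, link s t → h s < h t)
    (root : C) (hroot : h root = 0)
    (slashedI : Finset V)
    (hslashedI : ∀ v, v ∈ slashedI ↔ ∃ s₁ t₁ s₂ t₂ : C,
      (v, s₁, t₁) ∈ votes ∧ (v, s₂, t₂) ∈ votes ∧ (s₁, t₁) ≠ (s₂, t₂) ∧ h t₁ = h t₂)
    (hbound : ∑ v ∈ slashedI, w v < (1 / 3 : ℝ) * W)
    (c₁ c₂ : C)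
    (hj₁ : Justified link root c₁) (hj₂ : Justified link root c₂)
    (hh : h c₁ = h c₂) :
    c₁ = c₂ := by
  by_contra hne
  cases hj₁ with
  | root =>
    cases hj₂ with
    | root => exact hne rfl
    | step s₂ _ _ hl₂ =>
      have := hlinkh _ _ hl₂
      rw [← hh, hroot] at this
      omega
  | step s₁ _ _ hl₁ =>
    cases hj₂ with
    | root =>
      have := hlinkh _ _ hl₁
      rw [hh, hroot] at this
      omega
    | step s₂ _ _ hl₂ =>
      set A := Finset.univ.filter (fun v => (v, s₁, c₁) ∈ votes) with hA
      set B := Finset.univ.filter (fun v => (v, s₂, c₂) ∈ votes) with hB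
      have h1 : (2 / 3 : ℝ) * W ≤ ∑ v ∈ A, w v := (hlinkdef _ _).mp hl₁
      have h2 : (2 / 3 : ℝ) * W ≤ ∑ v ∈ B, w v := (hlinkdef _ _).mp hl₂
      have hunion : ∑ v ∈ A ∪ B, w v ≤ W := by
        rw [hW]
        exact Finset.sum_le_sum_of_subset_of_nonneg (Finset.subset_univ _)
          (fun v _ _ => hw v)
      have hsum : ∑ v ∈ A, w v + ∑ v ∈ B, w v
          = ∑ v ∈ A ∪ B, w v + ∑ v ∈ A ∩ B, w v :=
        (Finset.sum_union_inter).symm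
      have hinter : (1 / 3 : ℝ) * W ≤ ∑ v ∈ A ∩ B, w v := by linarith
      have hnotsub : ¬ (A ∩ B ⊆ slashedI) := by
        intro hsub
        have := Finset.sum_le_sum_of_subset_of_nonneg hsub (fun v _ _ => hw v)
        linarith
      obtain ⟨v, hvAB, hvS⟩ := Finset.not_subset.mp hnotsub
      have hvA : (v, s₁, c₁) ∈ votes := by
        have := Finset.mem_inter.mp hvAB |>.1
        simpa [hA] using this
      have hvB : (v, s₂, c₂) ∈ votes := by
        have := Finset.mem_inter.mp hvAB |>.2
        simpa [hB] using this
      exact hvS ((hslashedI v).mpr ⟨s₁, c₁, s₂, c₂, hvA, hvB,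
        fun he => hne (congrArg Prod.snd he), hh⟩)
end

section
/- (Accountable Safety) If two conflicting checkpoints a and b (i.e., neither is an ancestor of the other in the checkpoint tree) are both finalized, then validators with total weight at least 1/3 of the total deposit have violated slashing condition I or slashing condition II. -/
/-- `a` is an ancestor of `b` in the rooted tree determined by `parent`. -/
def Ancestor {C : Type*} (parent : C → C) (a b : C) : Prop :=
  ∃ k : ℕ, parent^[k] b = a

/-- Accountable Safety: if two conflicting checkpoints are both finalized,
then validators of total weight at least 1/3 of the total deposit have
violated slashing condition I or slashing condition II. -/
theorem stmt_5 {V C : Type*} [DecidableEq V] [DecidableEq C] [Fintype V]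
    (w : V → ℝ) (hw : ∀ v, 0 ≤ w v)
    (h : C → ℕ)
    (parent : C → C) (root : C)
    (hroot : h root = 0) (hparentroot : parent root = root)
    (hparent : ∀ c, c ≠ root → h c = h (parent c) + 1)
    (votes : Finset (V × C × C))
    (hvotes : ∀ v s t, (v, s, t) ∈ votes → Ancestor parent s t ∧ s ≠ t)
    (W : ℝ) (hW : W = ∑ v, w v) (hWpos : 0 < W)
    (link : C → C → Prop)
    (hlinkdef : ∀ s t, link s t ↔
      (2 / 3 : ℝ) * W ≤ ∑ v ∈ Finset.univ.filter (fun v => (v, s, t) ∈ votes), w v)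
    (finalized : C → Prop)
    (hfin : ∀ c, finalized c ↔ (c = root ∨ (Justified link root c ∧
      ∃ c', link c c' ∧ parent c' = c ∧ h c' = h c + 1)))
    (slashed : Finset V)
    (hslashed : ∀ v, v ∈ slashed ↔ ∃ s₁ t₁ s₂ t₂ : C,
      (v, s₁, t₁) ∈ votes ∧ (v, s₂, t₂) ∈ votes ∧
      (((s₁, t₁) ≠ (s₂, t₂) ∧ h t₁ = h t₂) ∨
       (h s₁ < h s₂ ∧ h s₂ < h t₂ ∧ h t₂ < h t₁)))
    (a b : C)
    (hconflict : ¬ Ancestor parent a b ∧ ¬ Ancestor parent b a)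
    (hfa : finalized a) (hfb : finalized b) :
    (1 / 3 : ℝ) * W ≤ ∑ v ∈ slashed, w v := by
  -- height zero means root
  have h0 : ∀ c : C, h c = 0 → c = root := by
    intro c hc
    by_contra hne
    have := hparent c hne
    omega
  -- iterate decreases height
  have hiter : ∀ k (t : C), parent^[k] t ≠ t → h (parent^[k] t) < h t := by
    intro k
    induction k with
    | zero => intro t ht; exact absurd rfl ht
    | succ n ih =>
      intro t ht
      rw [Function.iterate_succ_apply] at ht ⊢
      by_cases htr : t = root
      · subst htr
        rw [hparentroot] at ht ⊢
        exact absurd (Function.iterate_fixed hparentroot n) ht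
      · have hpt : h t = h (parent t) + 1 := hparent t htr
        by_cases hfix : parent^[n] (parent t) = parent t
        · rw [hfix]; omega
        · have := ih (parent t) hfix
          omega
  have hanc_lt : ∀ s t : C, Ancestor parent s t → s ≠ t → h s < h t := by
    rintro s t ⟨k, hk⟩ hne
    have : parent^[k] t ≠ t := by rw [hk]; exact hne
    have := hiter k t this
    rwa [hk] at this
  -- root is an ancestor of everything
  have hroot_anc : ∀ c : C, Ancestor parent root c := by
    have : ∀ n (c : C), h c ≤ n → Ancestor parent root c := by
      intro n
      induction n with
      | zero =>
        intro c hc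
        have := h0 c (Nat.le_zero.mp hc)
        exact ⟨0, by simpa using this⟩
      | succ n ih =>
        intro c hc
        by_cases hcr : c = root
        · exact ⟨0, by simpa using hcr⟩
        · have hpc : h c = h (parent c) + 1 := hparent c hcr
          obtain ⟨k, hk⟩ := ih (parent c) (by omega)
          exact ⟨k + 1, by rw [Function.iterate_succ_apply]; exact hk⟩
    exact fun c => this (h c) c le_rfl
  -- ancestor transitivity
  have hanc_trans : ∀ x y z : C, Ancestor parent x y → Ancestor parent y z →
      Ancestor parent x z := by
    rintro x y z ⟨k, hk⟩ ⟨j, hj⟩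
    exact ⟨k + j, by rw [Function.iterate_add_apply, hj, hk]⟩
  -- links give ancestor info
  have hlink_votes : ∀ s t : C, link s t → Ancestor parent s t ∧ s ≠ t := by
    intro s t hl
    rw [hlinkdef] at hl
    by_contra hcon
    have hempty : Finset.univ.filter (fun v => (v, s, t) ∈ votes) = ∅ := by
      rw [Finset.filter_eq_empty_iff]
      intro v _ hv
      exact hcon (hvotes v s t hv)
    rw [hempty, Finset.sum_empty] at hl
    nlinarith
  -- quorum intersection lemma
  have quorum : ∀ s₁ t₁ s₂ t₂ : C, link s₁ t₁ → link s₂ t₂ →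
      (∀ v : V, (v, s₁, t₁) ∈ votes → (v, s₂, t₂) ∈ votes → v ∈ slashed) →
      (1 / 3 : ℝ) * W ≤ ∑ v ∈ slashed, w v := by
    intro s₁ t₁ s₂ t₂ hl1 hl2 hsl
    set A := Finset.univ.filter (fun v => (v, s₁, t₁) ∈ votes) with hA
    set B := Finset.univ.filter (fun v => (v, s₂, t₂) ∈ votes) with hB
    have h1 : (2 / 3 : ℝ) * W ≤ ∑ v ∈ A, w v := (hlinkdef _ _).mp hl1
    have h2 : (2 / 3 : ℝ) * W ≤ ∑ v ∈ B, w v := (hlinkdef _ _).mp hl2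
    have hsub : A ∩ B ⊆ slashed := by
      intro v hv
      rw [Finset.mem_inter, hA, hB, Finset.mem_filter, Finset.mem_filter] at hv
      exact hsl v hv.1.2 hv.2.2
    have hunion : ∑ v ∈ A ∪ B, w v ≤ W := by
      rw [hW]
      exact Finset.sum_le_sum_of_subset_of_nonneg (Finset.subset_univ _)
        (fun v _ _ => hw v)
    have hui : ∑ v ∈ A ∪ B, w v + ∑ v ∈ A ∩ B, w v = ∑ v ∈ A, w v + ∑ v ∈ B, w v :=
      Finset.sum_union_inter
    have hinter : (1 / 3 : ℝ) * W ≤ ∑ v ∈ A ∩ B, w v := by linarith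
    have := Finset.sum_le_sum_of_subset_of_nonneg hsub (fun v _ _ => hw v)
    linarith
  -- justified non-root checkpoints are targets of links
  have hjust_inv : ∀ c : C, Justified link root c → c ≠ root →
      ∃ s, Justified link root s ∧ link s c := by
    intro c hc
    cases hc with
    | root => intro hne; exact absurd rfl hne
    | step s c hs hl => exact fun _ => ⟨s, hs, hl⟩
  -- neither a nor b is root
  have hanr : a ≠ root := fun he => hconflict.1 (he ▸ hroot_anc b)
  have hbnr : b ≠ root := fun he => hconflict.2 (he ▸ hroot_anc a)
  obtain ⟨ja, a', hla, hpa, hha⟩ := ((hfin a).mp hfa).resolve_left hanr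
  obtain ⟨jb, b', hlb, hpb, hhb⟩ := ((hfin b).mp hfb).resolve_left hbnr
  have hapos : 0 < h a := Nat.pos_of_ne_zero (fun hz => hanr (h0 a hz))
  have hbpos : 0 < h b := Nat.pos_of_ne_zero (fun hz => hbnr (h0 b hz))
  -- the key lemma
  have key : ∀ (x x' y : C), Justified link root x → link x x' → parent x' = x →
      h x' = h x + 1 → x ≠ root → Justified link root y → ¬ Ancestor parent x y →
      h x < h y → (1 / 3 : ℝ) * W ≤ ∑ v ∈ slashed, w v := by
    intro x x' y hjx hlx hpx hhx hxr hjy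
    induction hjy with
    | root => intro _ hlt; rw [hroot] at hlt; omega
    | step c' c hjc' hlc ih =>
      intro hnanc hlt
      have hancc : Ancestor parent c' c := (hlink_votes c' c hlc).1
      have hnanc' : ¬ Ancestor parent x c' := fun hx => hnanc (hanc_trans _ _ _ hx hancc)
      by_cases hc' : h x < h c'
      · exact ih hnanc' hc'
      · push_neg at hc'
        -- h c' ≤ h x < h c
        have hne : (c', c) ≠ (x, x') := by
          intro he
          have hc : c = x' := congrArg Prod.snd he
          exact hnanc (hanc_trans _ _ _ ⟨1, by simpa using hpx⟩ ⟨0, hc⟩)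
        rcases Nat.lt_or_ge (h x + 1) (h c) with hgt | hle
        · -- h c > h x + 1
          rcases Nat.lt_or_ge (h c') (h x) with hlt' | hge
          · -- condition II
            refine quorum c' c x x' hlc hlx ?_
            intro v hv1 hv2
            rw [hslashed]
            exact ⟨c', c, x, x', hv1, hv2, Or.inr ⟨hlt', by omega, by omega⟩⟩
          · -- h c' = h x : two justified at same height
            have hceq : h c' = h x := le_antisymm hc' hge
            have hc'ne : c' ≠ x := by
              intro he; exact hnanc' (he ▸ ⟨0, rfl⟩)
            have hxpos : 0 < h x := Nat.pos_of_ne_zero (fun hz => hxr (h0 x hz))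
            have hc'nr : c' ≠ root := by
              intro he; rw [he, hroot] at hceq; omega
            obtain ⟨s1, _, hls1⟩ := hjust_inv c' hjc' hc'nr
            obtain ⟨s2, _, hls2⟩ := hjust_inv x hjx hxr
            refine quorum s1 c' s2 x hls1 hls2 ?_
            intro v hv1 hv2
            rw [hslashed]
            refine ⟨s1, c', s2, x, hv1, hv2, Or.inl ⟨?_, hceq⟩⟩
            intro he
            exact hc'ne (congrArg Prod.snd he)
        · -- h c = h x + 1 : condition I with (x, x')
          have hceq : h c = h x' := by omega
          refine quorum c' c x x' hlc hlx ?_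
          intro v hv1 hv2
          rw [hslashed]
          exact ⟨c', c, x, x', hv1, hv2, Or.inl ⟨hne, hceq⟩⟩
  rcases Nat.lt_trichotomy (h a) (h b) with hab | hab | hab
  · exact key a a' b ja hla hpa hha hanr jb hconflict.1 hab
  · -- equal heights: condition I directly on links into a and b
    have hne : a ≠ b := fun he => hconflict.1 (he ▸ ⟨0, rfl⟩)
    obtain ⟨s1, _, hls1⟩ := hjust_inv a ja hanr
    obtain ⟨s2, _, hls2⟩ := hjust_inv b jb hbnr
    refine quorum s1 a s2 b hls1 hls2 ?_
    intro v hv1 hv2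
    rw [hslashed]
    refine ⟨s1, a, s2, b, hv1, hv2, Or.inl ⟨?_, hab⟩⟩
    intro he
    exact hne (congrArg Prod.snd he)
  · exact key b b' a jb hlb hpb hhb hbnr ja hconflict.2 hab
end

section
/- (Plausible Liveness) Given any set of previously published votes in which fewer than 1/3 by weight of validators are slashed, if the checkpoint tree contains descendants of the highest justified checkpoint at arbitrarily large heights, then the honest supermajority (≥ 2/3 by weight) can publish new votes creating a supermajority link justifying a checkpoint a' of height h(b)+1 (where b is the highest target of any existing vote) and then a supermajority link from a' to a direct child of a', finalizing a', with no honest validator violating slashing condition I or II. -/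
/-- Plausible Liveness: given any set of previously published votes in which
fewer than 1/3 by weight of validators are slashed, if the checkpoint tree
contains descendants of the highest justified checkpoint `a` at arbitrarily
large heights, then there are checkpoints `a'` (of height `h b + 1`, where `b`
is the highest existing vote target) and `c'` (a direct child of `a'`) such
that, once all honest (unslashed) validators publish the votes `(a, a')` and
`(a', c')`, these forge supermajority links justifying `a'` and then
finalizing `a'`, with no honest validator violating condition I or II. -/
theorem stmt_6 {V C : Type*} [DecidableEq V] [DecidableEq C] [Fintype V]
    (w : V → ℝ) (hw : ∀ v, 0 ≤ w v)
    (h : C → ℕ)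
    (parent : C → C) (root : C)
    (hroot : h root = 0) (hparentroot : parent root = root)
    (hparent : ∀ c, c ≠ root → h c = h (parent c) + 1)
    (votes : Finset (V × C × C))
    (W : ℝ) (hW : W = ∑ v, w v) (hWpos : 0 < W)
    (link : C → C → Prop)
    (hlinkdef : ∀ s t, link s t ↔
      (2 / 3 : ℝ) * W ≤ ∑ v ∈ Finset.univ.filter (fun v => (v, s, t) ∈ votes), w v)
    -- every valid vote has a justified source and a target of greater height
    (hvotes : ∀ v s t, (v, s, t) ∈ votes → Justified link root s ∧ h s < h t)
    (slashed : Finset V)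
    (hslashed : ∀ v, v ∈ slashed ↔ ∃ s₁ t₁ s₂ t₂ : C,
      (v, s₁, t₁) ∈ votes ∧ (v, s₂, t₂) ∈ votes ∧
      (((s₁, t₁) ≠ (s₂, t₂) ∧ h t₁ = h t₂) ∨
       (h s₁ < h s₂ ∧ h s₂ < h t₂ ∧ h t₂ < h t₁)))
    (hbound : ∑ v ∈ slashed, w v < (1 / 3 : ℝ) * W)
    -- `a` is the justified checkpoint of greatest height
    (a : C) (ha : Justified link root a) (hamax : ∀ c, Justified link root c → h c ≤ h a)
    -- `b` is the highest target of any existing vote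
    (b : C) (hbmax : ∀ v s t, (v, s, t) ∈ votes → h t ≤ h b) (hab : h a ≤ h b)
    -- the tree contains descendants of `a` at arbitrarily large heights
    (htree : ∀ n, h a ≤ n → ∃ c, Ancestor parent a c ∧ h c = n) :
    ∃ a' c' : C,
      Ancestor parent a a' ∧ h a' = h b + 1 ∧
      parent c' = a' ∧ h c' = h a' + 1 ∧
      -- adding the honest votes (a, a') and (a', c') creates supermajority links
      ((2 / 3 : ℝ) * W ≤ ∑ v ∈ Finset.univ.filter (fun v =>
          (v, a, a') ∈ votes ∪ (Finset.univ \ slashed).image (fun u => (u, a, a'))), w v) ∧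
      ((2 / 3 : ℝ) * W ≤ ∑ v ∈ Finset.univ.filter (fun v =>
          (v, a', c') ∈ votes ∪ (Finset.univ \ slashed).image (fun u => (u, a', c'))), w v) ∧
      -- so `a'` is justified and, with the link to its direct child `c'`, finalized
      -- and no honest validator violates condition I or II by publishing them:
      -- the new votes do not conflict with any of the validator's prior votes,
      (∀ v, v ∉ slashed → ∀ s' t', (v, s', t') ∈ votes →
        (h a' ≠ h t' ∧ ¬(h s' < h a ∧ h a < h a' ∧ h a' < h t')
          ∧ ¬(h a < h s' ∧ h s' < h t' ∧ h t' < h a')) ∧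
        (h c' ≠ h t' ∧ ¬(h s' < h a' ∧ h a' < h c' ∧ h c' < h t')
          ∧ ¬(h a' < h s' ∧ h s' < h t' ∧ h t' < h c'))) ∧
      -- nor do the two new votes conflict with each other
      (h a' ≠ h c' ∧ ¬(h a < h a' ∧ h a' < h c' ∧ h c' < h a')
        ∧ ¬(h a' < h a ∧ h a < h a' ∧ h a' < h c')) := by

  obtain ⟨c, ⟨k, hk⟩, hc⟩ := htree (h b + 2) (by omega)
  have hcroot : c ≠ root := by
    intro hcr; rw [hcr, hroot] at hc; omega
  have hcp : h c = h (parent c) + 1 := hparent c hcroot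
  -- k ≥ 1
  have hk1 : k ≠ 0 := by
    intro h0; rw [h0] at hk; simp at hk; rw [hk] at hc; omega
  refine ⟨parent c, c, ⟨k - 1, ?_⟩, by omega, rfl, by omega, ?_, ?_, ?_, ?_⟩
  · rw [← hk]; rw [← Function.iterate_succ_apply]
    congr 1; omega
  all_goals try (
    have hsum : (2 / 3 : ℝ) * W ≤ ∑ v ∈ Finset.univ \ slashed, w v := by
      have h1 : ∑ v ∈ Finset.univ \ slashed, w v
          = W - ∑ v ∈ slashed, w v := by
        rw [hW, eq_sub_iff_add_eq, Finset.sum_sdiff (Finset.subset_univ slashed)]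
      rw [h1]; linarith
    refine le_trans hsum (Finset.sum_le_sum_of_subset_of_nonneg ?_ (fun v _ _ => hw v))
    intro v hv
    simp only [Finset.mem_filter, Finset.mem_univ, true_and, Finset.mem_union,
      Finset.mem_image]
    exact Or.inr ⟨v, hv, rfl⟩)
  · intro v hv s' t' hvote
    have ht' : h t' ≤ h b := hbmax v s' t' hvote
    have hs' : h s' ≤ h a := hamax s' (hvotes v s' t' hvote).1
    refine ⟨⟨by omega, by omega, by omega⟩, ⟨by omega, by omega, by omega⟩⟩
  · exact ⟨by omega, by omega, by omega⟩
end

section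
/- Assume fewer than 1/3 of validators by weight violate condition I or II. If a is a finalized checkpoint with justified child a' (h(a') = h(a)+1), and b is a justified checkpoint conflicting with a with h(b) > h(a'), then in any justification chain r → b₁ → ⋯ → b_n = b of supermajority links, there exists an index j with h(b_{j-1}) < h(a) and h(b_j) > h(a')—i.e., a supermajority link that 'spans over' the link a → a'. -/
open Finset

namespace Ancestor

variable {C : Type*} {parent : C → C}

theorem refl (a : C) : Ancestor parent a a := ⟨0, rfl⟩

theorem parent_self (a : C) : Ancestor parent (parent a) a := ⟨1, rfl⟩

theorem trans {a b c : C} (hab : Ancestor parent a b) (hbc : Ancestor parent b c) :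
    Ancestor parent a c := by
  obtain ⟨k, rfl⟩ := hab
  obtain ⟨l, rfl⟩ := hbc
  exact ⟨k + l, Function.iterate_add_apply parent k l c⟩

end Ancestor

theorem eq_root_of_height_eq_zero {C : Type*} {h : C → ℕ} {parent : C → C} {root : C}
    (hparent : ∀ c, c ≠ root → h c = h (parent c) + 1) {x : C} (hx : h x = 0) : x = root := by
  by_contra hne
  have := hparent x hne
  omega

theorem ancestor_of_chain {C : Type*} {parent : C → C} {link : C → C → Prop}
    (hlink : ∀ s t, link s t → Ancestor parent s t) {c : ℕ → C} :
    ∀ {n : ℕ}, (∀ i < n, link (c i) (c (i + 1))) → ∀ i ≤ n, Ancestor parent (c i) (c n)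
  | 0, _, i, hi => by rw [Nat.le_zero.1 hi]; exact .refl _
  | n + 1, hchain, i, hi => by
    rcases Nat.lt_or_eq_of_le hi with hi | rfl
    · exact (ancestor_of_chain hlink (fun k hk => hchain k (by omega)) i (by omega)).trans
        (hlink _ _ (hchain n n.lt_succ_self))
    · exact .refl _

theorem Justified.of_chain {C : Type*} {link : C → C → Prop} {root : C} {c : ℕ → C} {n : ℕ}
    (hc0 : c 0 = root) (hchain : ∀ i < n, link (c i) (c (i + 1))) :
    ∀ i ≤ n, Justified link root (c i)
  | 0, _ => hc0 ▸ .root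
  | i + 1, hi => .step _ _ (of_chain hc0 hchain i (by omega)) (hchain i hi)

theorem Justified.eq_of_height_eq {C : Type*} {link : C → C → Prop} {root : C} {h : C → ℕ}
    (hroot : ∀ x, h x = h root → x = root)
    (hlink : ∀ s₁ t₁ s₂ t₂, link s₁ t₁ → link s₂ t₂ → h t₁ = h t₂ → t₁ = t₂)
    {x y : C} (hx : Justified link root x) (hy : Justified link root y) (hxy : h x = h y) :
    x = y := by
  cases hx with
  | root => exact (hroot y hxy.symm).symm
  | step s x _ hsx =>
    cases hy with
    | root => exact hroot x hxy
    | step t y _ hty => exact hlink s x t y hsx hty hxy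

theorem exists_mem_inter_not_mem_of_supermajority {V : Type*} [Fintype V] [DecidableEq V]
    {w : V → ℝ} (hw : ∀ v, 0 ≤ w v) {A B S : Finset V}
    (hA : (2 / 3 : ℝ) * ∑ v, w v ≤ ∑ v ∈ A, w v) (hB : (2 / 3 : ℝ) * ∑ v, w v ≤ ∑ v ∈ B, w v)
    (hS : ∑ v ∈ S, w v < (1 / 3 : ℝ) * ∑ v, w v) :
    ∃ v ∈ A ∩ B, v ∉ S := by
  by_contra! hsub
  have hunion : ∑ v ∈ A ∪ B, w v ≤ ∑ v, w v :=
    sum_le_sum_of_subset_of_nonneg (subset_univ _) fun v _ _ => hw v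
  have hinter : ∑ v ∈ A ∩ B, w v ≤ ∑ v ∈ S, w v :=
    sum_le_sum_of_subset_of_nonneg hsub fun v _ _ => hw v
  have := sum_union_inter (s₁ := A) (s₂ := B) (f := w)
  linarith

theorem exists_link_spanning {C : Type*} {h : C → ℕ} {parent : C → C} {root : C}
    {link : C → C → Prop} (hroot : h root = 0)
    (hlink : ∀ s t, link s t → Ancestor parent s t)
    (hunique : ∀ x y, Justified link root x → Justified link root y → h x = h y → x = y)
    {a a' b : C} (hja : Justified link root a) (hja' : Justified link root a')
    (hchild : parent a' = a) (hha' : h a' = h a + 1)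
    (hab : ¬ Ancestor parent a b) (hhb : h a' < h b)
    {n : ℕ} {c : ℕ → C} (hc0 : c 0 = root) (hcn : c n = b)
    (hchain : ∀ i < n, link (c i) (c (i + 1))) :
    ∃ j, 1 ≤ j ∧ j ≤ n ∧ h (c (j - 1)) < h a ∧ h a' < h (c j) := by
  obtain ⟨j, hj_le, hjn, hj_gt⟩ := Nat.exists_not_and_succ_of_not_zero_of_exists
    (p := fun i => i ≤ n ∧ h a' < h (c i)) (by simp [hc0, hroot]) ⟨n, le_rfl, hcn ▸ hhb⟩
  replace hj_le : h (c j) ≤ h a' := not_lt.1 fun hlt => hj_le ⟨by omega, hlt⟩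
  have hjust := Justified.of_chain hc0 hchain j (by omega)
  have hanc : Ancestor parent (c j) b := hcn ▸ ancestor_of_chain hlink hchain j (by omega)
  have hne_a : c j ≠ a := fun he => hab (he ▸ hanc)
  have hne_a' : c j ≠ a' := fun he => hab (hchild ▸ (Ancestor.parent_self a').trans (he ▸ hanc))
  have := mt (hunique _ _ hjust hja) hne_a
  have := mt (hunique _ _ hjust hja') hne_a'
  exact ⟨j + 1, by omega, hjn, by simpa using (by omega : h (c j) < h a), hj_gt⟩

theorem stmt_10_general {V C : Type*} [DecidableEq V] [DecidableEq C] [Fintype V]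
    (w : V → ℝ) (hw : ∀ v, 0 ≤ w v)
    (h : C → ℕ)
    (parent : C → C) (root : C)
    (hroot : h root = 0)
    (hparent : ∀ c, c ≠ root → h c = h (parent c) + 1)
    (votes : Finset (V × C × C))
    (hvotes : ∀ v s t, (v, s, t) ∈ votes → Ancestor parent s t ∧ s ≠ t)
    (W : ℝ) (hW : W = ∑ v, w v)
    (link : C → C → Prop)
    (hlinkdef : ∀ s t, link s t ↔
      (2 / 3 : ℝ) * W ≤ ∑ v ∈ Finset.univ.filter (fun v => (v, s, t) ∈ votes), w v)
    (slashed : Finset V)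
    (hslashed : ∀ v, v ∈ slashed ↔ ∃ s₁ t₁ s₂ t₂ : C,
      (v, s₁, t₁) ∈ votes ∧ (v, s₂, t₂) ∈ votes ∧
      (((s₁, t₁) ≠ (s₂, t₂) ∧ h t₁ = h t₂) ∨
       (h s₁ < h s₂ ∧ h s₂ < h t₂ ∧ h t₂ < h t₁)))
    (hbound : ∑ v ∈ slashed, w v < (1 / 3 : ℝ) * W)
    -- `a` is finalized with justified direct child `a'`
    (a a' : C) (hja : Justified link root a) (hja' : Justified link root a')
    (hchild : parent a' = a) (hha' : h a' = h a + 1)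
    -- `b` is justified, conflicts with `a`, and h b > h a'
    (b : C)
    (hconflict : ¬ Ancestor parent a b ∧ ¬ Ancestor parent b a)
    (hhb : h a' < h b)
    -- a justification chain from the root to `b`
    (n : ℕ) (c : ℕ → C)
    (hc0 : c 0 = root) (hcn : c n = b)
    (hchain : ∀ i < n, link (c i) (c (i + 1))) :
    ∃ j, 1 ≤ j ∧ j ≤ n ∧ h (c (j - 1)) < h a ∧ h a' < h (c j) := by
  subst hW
  have hquorum : ∀ {s t}, link s t → (2 / 3 : ℝ) * ∑ v, w v ≤
      ∑ v ∈ univ.filter (fun v => (v, s, t) ∈ votes), w v := (hlinkdef _ _).1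
  have hlink_anc : ∀ s t, link s t → Ancestor parent s t := by
    intro s t hst
    obtain ⟨v, hv, -⟩ :=
      exists_mem_inter_not_mem_of_supermajority hw (hquorum hst) (hquorum hst) hbound
    exact (hvotes v s t (by simpa using hv)).1
  have hlink_unique : ∀ s₁ t₁ s₂ t₂, link s₁ t₁ → link s₂ t₂ → h t₁ = h t₂ → t₁ = t₂ := by
    intro s₁ t₁ s₂ t₂ h₁ h₂ hh
    obtain ⟨v, hv, hv_honest⟩ :=
      exists_mem_inter_not_mem_of_supermajority hw (hquorum h₁) (hquorum h₂) hbound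
    simp only [mem_inter, mem_filter, mem_univ, true_and] at hv
    by_contra hne
    exact hv_honest <| (hslashed v).2
      ⟨s₁, t₁, s₂, t₂, hv.1, hv.2, .inl ⟨fun he => hne (Prod.ext_iff.1 he).2, hh⟩⟩
  have hunique : ∀ x y, Justified link root x → Justified link root y → h x = h y → x = y :=
    fun _ _ => Justified.eq_of_height_eq
      (fun _ hx => eq_root_of_height_eq_zero hparent (hroot ▸ hx)) hlink_unique
  exact exists_link_spanning hroot hlink_anc hunique hja hja' hchild hha' hconflict.1 hhb
    hc0 hcn hchain

/-- Assume fewer than 1/3 of validators by weight violate condition I or II.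
If `a` is a finalized checkpoint with justified direct child `a'`
(h a' = h a + 1), and `b` is a justified checkpoint conflicting with `a` with
h b > h a', then in any justification chain root = c₀ → c₁ → ⋯ → c_n = b of
supermajority links there is an index j with h (c (j-1)) < h a and
h (c j) > h a', i.e. a supermajority link spanning over the link a → a'. -/
theorem stmt_10 {V C : Type*} [DecidableEq V] [DecidableEq C] [Fintype V]
    (w : V → ℝ) (hw : ∀ v, 0 ≤ w v)
    (h : C → ℕ)
    (parent : C → C) (root : C)
    (hroot : h root = 0) (hparentroot : parent root = root)
    (hparent : ∀ c, c ≠ root → h c = h (parent c) + 1)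
    (votes : Finset (V × C × C))
    (hvotes : ∀ v s t, (v, s, t) ∈ votes → Ancestor parent s t ∧ s ≠ t)
    (W : ℝ) (hW : W = ∑ v, w v) (hWpos : 0 < W)
    (link : C → C → Prop)
    (hlinkdef : ∀ s t, link s t ↔
      (2 / 3 : ℝ) * W ≤ ∑ v ∈ Finset.univ.filter (fun v => (v, s, t) ∈ votes), w v)
    (slashed : Finset V)
    (hslashed : ∀ v, v ∈ slashed ↔ ∃ s₁ t₁ s₂ t₂ : C,
      (v, s₁, t₁) ∈ votes ∧ (v, s₂, t₂) ∈ votes ∧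
      (((s₁, t₁) ≠ (s₂, t₂) ∧ h t₁ = h t₂) ∨
       (h s₁ < h s₂ ∧ h s₂ < h t₂ ∧ h t₂ < h t₁)))
    (hbound : ∑ v ∈ slashed, w v < (1 / 3 : ℝ) * W)
    -- `a` is finalized with justified direct child `a'`
    (a a' : C) (hja : Justified link root a) (hja' : Justified link root a')
    (hlinkaa' : link a a') (hchild : parent a' = a) (hha' : h a' = h a + 1)
    -- `b` is justified, conflicts with `a`, and h b > h a'
    (b : C) (hjb : Justified link root b)
    (hconflict : ¬ Ancestor parent a b ∧ ¬ Ancestor parent b a)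
    (hhb : h a' < h b)
    -- a justification chain from the root to `b`
    (n : ℕ) (c : ℕ → C)
    (hc0 : c 0 = root) (hcn : c n = b)
    (hchain : ∀ i < n, link (c i) (c (i + 1))) :
    ∃ j, 1 ≤ j ∧ j ≤ n ∧ h (c (j - 1)) < h a ∧ h a' < h (c j) :=
  stmt_10_general w hw h parent root hroot hparent votes hvotes W hW link hlinkdef slashed hslashed
    hbound a a' hja hja' hchild hha' b hconflict hhb n c hc0 hcn hchain
end

section
/- If every supermajority link s→t satisfies h(s) < h(t), and fewer than 1/3 of validators by weight violate condition I, then any two distinct finalized checkpoints have distinct heights. -/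
/-- If every supermajority link s→t satisfies h s < h t, and fewer than 1/3 of
validators by weight violate slashing condition I, then any two distinct
finalized checkpoints have distinct heights. -/
theorem stmt_16 {V C : Type*} [DecidableEq V] [DecidableEq C] [Fintype V]
    (w : V → ℝ) (hw : ∀ v, 0 ≤ w v)
    (h : C → ℕ)
    (votes : Finset (V × C × C))
    (W : ℝ) (hW : W = ∑ v, w v)
    (link : C → C → Prop)
    (hlinkdef : ∀ s t, link s t ↔
      (2 / 3 : ℝ) * W ≤ ∑ v ∈ Finset.univ.filter (fun v => (v, s, t) ∈ votes), w v)
    (hlinkh : ∀ s t, link s t → h s < h t)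
    (root : C) (hroot : h root = 0)
    (slashedI : Finset V)
    (hslashedI : ∀ v, v ∈ slashedI ↔ ∃ s₁ t₁ s₂ t₂ : C,
      (v, s₁, t₁) ∈ votes ∧ (v, s₂, t₂) ∈ votes ∧ (s₁, t₁) ≠ (s₂, t₂) ∧ h t₁ = h t₂)
    (hbound : ∑ v ∈ slashedI, w v < (1 / 3 : ℝ) * W)
    (finalized : C → Prop)
    (hfin : ∀ c, finalized c ↔ (c = root ∨ (Justified link root c ∧
      ∃ c', link c c' ∧ h c' = h c + 1)))
    (c₁ c₂ : C) (hne : c₁ ≠ c₂)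
    (hf₁ : finalized c₁) (hf₂ : finalized c₂) :
    h c₁ ≠ h c₂ := by
  intro hcc
  rw [hfin] at hf₁ hf₂
  have hj₁ : Justified link root c₁ := by
    rcases hf₁ with rfl | ⟨hj, _⟩
    · exact Justified.root
    · exact hj
  have hj₂ : Justified link root c₂ := by
    rcases hf₂ with rfl | ⟨hj, _⟩
    · exact Justified.root
    · exact hj
  -- weight facts
  have hWnn : (0 : ℝ) ≤ W := by
    rw [hW]; exact Finset.sum_nonneg (fun v _ => hw v)
  have main : ∀ s₁ s₂ : C, link s₁ c₁ → link s₂ c₂ → False := by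
    intro s₁ s₂ hl₁ hl₂
    set A := Finset.univ.filter (fun v => (v, s₁, c₁) ∈ votes) with hA
    set B := Finset.univ.filter (fun v => (v, s₂, c₂) ∈ votes) with hB
    have hsA : (2 / 3 : ℝ) * W ≤ ∑ v ∈ A, w v := (hlinkdef s₁ c₁).mp hl₁
    have hsB : (2 / 3 : ℝ) * W ≤ ∑ v ∈ B, w v := (hlinkdef s₂ c₂).mp hl₂
    have hsub : A ∩ B ⊆ slashedI := by
      intro v hv
      rw [Finset.mem_inter, hA, hB, Finset.mem_filter, Finset.mem_filter] at hv
      rw [hslashedI]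
      exact ⟨s₁, c₁, s₂, c₂, hv.1.2, hv.2.2,
        fun hp => hne (by simpa using congrArg Prod.snd hp), hcc⟩
    have h1 : ∑ v ∈ A ∩ B, w v ≤ ∑ v ∈ slashedI, w v :=
      Finset.sum_le_sum_of_subset_of_nonneg hsub (fun v _ _ => hw v)
    have h2 : ∑ v ∈ A ∪ B, w v ≤ W := by
      rw [hW]
      exact Finset.sum_le_sum_of_subset_of_nonneg (Finset.subset_univ _)
        (fun v _ _ => hw v)
    have h3 : ∑ v ∈ A ∪ B, w v + ∑ v ∈ A ∩ B, w v = ∑ v ∈ A, w v + ∑ v ∈ B, w v :=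
      Finset.sum_union_inter
    linarith
  cases hj₁ with
  | root =>
    cases hj₂ with
    | root => exact hne rfl
    | step s₂ _ _ hl₂ =>
      have := hlinkh s₂ c₂ hl₂
      omega
  | step s₁ _ _ hl₁ =>
    cases hj₂ with
    | root =>
      have := hlinkh s₁ c₁ hl₁
      omega
    | step s₂ _ _ hl₂ => exact main s₁ s₂ hl₁ hl₂
end
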